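/- Under the gossip model setup, the one-step update matrix Q(0) satisfies the identity E{Q(0)^T ηη^T Q(0)} = (1 − 2λ1)·ηη^T + (λ1/(2 r0 n))·I_{r0 n}. -/

import Mathlib

/-!
Since `Qᵀ ηηᵀ Q = (ηᵀQ)ᵀ (ηᵀQ)`, only the row vector `ηᵀQ` matters. An edge between two regular
agents averages two coordinates and an edge between two stubborn agents touches none, so both fix
the constant vector `η`. An edge between the regular agent `i` and a stubborn agent `j` moves `η`
to `η - e_i / (2√(r₀n))`; it is drawn with probability `a_ij / α`, which sums over `j` to
`l⁽ˢ⁾ / α = 2λ₁`. Summing the rank-one corrections over `i`, using `∑ᵢ e_i = √(r₀n) η` and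
`∑ᵢ e_i e_iᵀ = I`, gives `-ηηᵀ + I / (4r₀n)`.
-/

open MeasureTheory ProbabilityTheory Matrix Finset Filter

set_option autoImplicit false
set_option linter.unusedVariables false

noncomputable section

/-- Indicator vector (in regular coordinates) of agent `i`; zero if `i` is stubborn. -/
def regInd (nr ns : ℕ) (i : Fin (nr + ns)) : Fin nr → ℝ :=
  fun k => if (k : ℕ) = (i : ℕ) then 1 else 0

/-- Indicator vector (in stubborn coordinates) of agent `j`; zero if `j` is regular. -/
def stubInd (nr ns : ℕ) (j : Fin (nr + ns)) : Fin ns → ℝ :=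
  fun k => if (k : ℕ) + nr = (j : ℕ) then 1 else 0

/-- The random update matrix Q determined by the selected edge `e` (with `e.1 < e.2`). -/
def Qmat (nr ns : ℕ) (e : Fin (nr + ns) × Fin (nr + ns)) : Matrix (Fin nr) (Fin nr) ℝ :=
  1 - (2⁻¹ : ℝ) • Matrix.vecMulVec (regInd nr ns e.1 - regInd nr ns e.2)
      (regInd nr ns e.1 - regInd nr ns e.2)

/-- The random update matrix R determined by the selected edge `e` (with `e.1 < e.2`). -/
def Rmat (nr ns : ℕ) (e : Fin (nr + ns) × Fin (nr + ns)) : Matrix (Fin nr) (Fin ns) ℝ :=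
  (2⁻¹ : ℝ) • Matrix.vecMulVec (regInd nr ns e.1) (stubInd nr ns e.2)

/-- Total edge weight α = Σ_i Σ_{j>i} a_{ij}. -/
def alphaW (nr ns : ℕ) (A : Matrix (Fin (nr + ns)) (Fin (nr + ns)) ℝ) : ℝ :=
  ∑ i : Fin (nr + ns), ∑ j : Fin (nr + ns), if (i : ℕ) < (j : ℕ) then A i j else 0

/-- The regular-to-stubborn weight matrix M̃. -/
def MtilM (nr ns : ℕ) (A : Matrix (Fin (nr + ns)) (Fin (nr + ns)) ℝ) :
    Matrix (Fin nr) (Fin ns) ℝ :=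
  Matrix.of fun i j => A (Fin.castAdd ns i) (Fin.natAdd nr j)

/-- η = 1/√(r₀n). -/
def etaV (nr : ℕ) : Fin nr → ℝ := fun _ => 1 / Real.sqrt nr

/-- ξ = [1; -1]/√(r₀n). -/
def xiV (nr : ℕ) : Fin nr → ℝ :=
  fun k => (if (k : ℕ) < nr / 2 then 1 else -1) / Real.sqrt nr

/-- Projection ηηᵀ x. -/
def projEta (nr : ℕ) (x : Fin nr → ℝ) : Fin nr → ℝ := (etaV nr ⬝ᵥ x) • etaV nr

/-- Projection ξξᵀ x. -/
def projXi (nr : ℕ) (x : Fin nr → ℝ) : Fin nr → ℝ := (xiV nr ⬝ᵥ x) • xiV nr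

/-- Projection Γ x = x - ηηᵀ x - ξξᵀ x. -/
def projGamma (nr : ℕ) (x : Fin nr → ℝ) : Fin nr → ℝ := x - projEta nr x - projXi nr x

/-- Projection x⊥ = x - ηηᵀ x. -/
def projPerp (nr : ℕ) (x : Fin nr → ℝ) : Fin nr → ℝ := x - projEta nr x

/-- Squared Euclidean norm. -/
def normSq {m : ℕ} (x : Fin m → ℝ) : ℝ := ∑ i, x i ^ 2

/-- Euclidean norm. -/
def enormV {m : ℕ} (x : Fin m → ℝ) : ℝ := Real.sqrt (normSq x)

/-- #{i : |x_i - y_i| > ε c_x}. -/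
def Scard {m : ℕ} (x y : Fin m → ℝ) (ε cx : ℝ) : ℕ :=
  (Finset.univ.filter fun i : Fin m => ε * cx < |x i - y i|).card


theorem Matrix.transpose_mul_vecMulVec_mul {R l m n : Type*} [CommSemiring R] [Fintype l]
    [Fintype m] (M : Matrix l m R) (N : Matrix l n R) (u v : l → R) :
    Mᵀ * vecMulVec u v * N = vecMulVec (u ᵥ* M) (v ᵥ* N) := by
  rw [mul_vecMulVec, vecMulVec_mul, mulVec_transpose]

theorem Matrix.vecMul_one_sub_smul_vecMulVec_self {R n : Type*} [CommRing R] [Fintype n]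
    [DecidableEq n] (v d : n → R) (a : R) :
    v ᵥ* (1 - a • vecMulVec d d) = v - (a * (v ⬝ᵥ d)) • d := by
  rw [vecMul_sub, vecMul_one, vecMul_smul, vecMul_vecMulVec, smul_smul]

theorem integral_matrix_comp_eq_sum {Ω β m n : Type*} [MeasurableSpace Ω] [Fintype β]
    [MeasurableSpace β] [MeasurableSingletonClass β] (P : Measure Ω) [IsFiniteMeasure P]
    {e : Ω → β} (he : Measurable e) (F : β → Matrix m n ℝ) :
    (Matrix.of fun k l => ∫ ω, F (e ω) k l ∂P) = ∑ b, P.real (e ⁻¹' {b}) • F b := by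
  ext k l
  rw [of_apply, ← integral_map (f := fun b => F b k l) he.aemeasurable (by fun_prop),
    integral_fintype .of_finite]
  simp [Matrix.sum_apply, map_measureReal_apply he (measurableSet_singleton _)]

theorem measureReal_preimage_singleton_of_lt {Ω N : Type*} [MeasurableSpace Ω]
    [LinearOrder N] (P : Measure Ω) {e : Ω → N × N} (he : ∀ ω, (e ω).1 < (e ω).2)
    (f : N → N → ℝ) (hf : ∀ i j, i < j → 0 ≤ f i j)
    (hdist : ∀ i j, i < j → P {ω | e ω = (i, j)} = ENNReal.ofReal (f i j)) (i j : N) :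
    P.real (e ⁻¹' {(i, j)}) = if i < j then f i j else 0 := by
  split_ifs with hij
  · exact (congrArg ENNReal.toReal (hdist i j hij)).trans (ENNReal.toReal_ofReal (hf i j hij))
  · have : e ⁻¹' {(i, j)} = ∅ :=
      Set.eq_empty_of_forall_notMem fun ω hω =>
        hij (by simpa [show e ω = (i, j) from hω] using he ω)
    simp [this]

theorem Fin.castAdd_lt_natAdd {m n : ℕ} (i : Fin m) (j : Fin n) :
    Fin.castAdd n i < Fin.natAdd m j :=
  Fin.lt_def.2 (by simp only [Fin.val_castAdd, Fin.val_natAdd]; omega)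

theorem alphaW_nonneg {nr ns : ℕ} {A : Matrix (Fin (nr + ns)) (Fin (nr + ns)) ℝ}
    (hA : ∀ i j : Fin (nr + ns), i < j → 0 ≤ A i j) : 0 ≤ alphaW nr ns A :=
  sum_nonneg fun i _ => sum_nonneg fun j _ => by
    split_ifs with hij
    · exact hA i j hij
    · exact le_rfl

section

variable {nr ns : ℕ}

theorem regInd_castAdd (i : Fin nr) : regInd nr ns (Fin.castAdd ns i) = Pi.single i 1 := by
  ext k
  simp [regInd, Pi.single_apply, Fin.ext_iff]

theorem regInd_natAdd (j : Fin ns) : regInd nr ns (Fin.natAdd nr j) = 0 := by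
  ext k
  simp only [regInd, Fin.val_natAdd, Pi.zero_apply]
  exact if_neg (by omega)

theorem sum_filter_le_eq_sum_natAdd {M : Type*} [AddCommMonoid M] (f : Fin (nr + ns) → M) :
    ∑ j ∈ univ.filter (fun j : Fin (nr + ns) => nr ≤ (j : ℕ)), f j =
      ∑ j : Fin ns, f (Fin.natAdd nr j) := by
  simp [sum_filter, Fin.sum_univ_add, fun x : Fin nr => x.isLt.not_ge]

variable (nr) in
def etaShift (i : Fin nr) : Fin nr → ℝ := etaV nr - (2 * Real.sqrt nr)⁻¹ • Pi.single i 1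

theorem etaV_vecMul_Qmat_castAdd_castAdd (i j : Fin nr) :
    etaV nr ᵥ* Qmat nr ns (Fin.castAdd ns i, Fin.castAdd ns j) = etaV nr := by
  rw [Qmat, vecMul_one_sub_smul_vecMulVec_self, regInd_castAdd, regInd_castAdd, dotProduct_sub,
    dotProduct_single, dotProduct_single]
  simp [etaV]

theorem etaV_vecMul_Qmat_natAdd_natAdd (i j : Fin ns) :
    etaV nr ᵥ* Qmat nr ns (Fin.natAdd nr i, Fin.natAdd nr j) = etaV nr := by
  simp [Qmat, regInd_natAdd]

theorem etaV_vecMul_Qmat_castAdd_natAdd (i : Fin nr) (j : Fin ns) :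
    etaV nr ᵥ* Qmat nr ns (Fin.castAdd ns i, Fin.natAdd nr j) = etaShift nr i := by
  rw [Qmat, vecMul_one_sub_smul_vecMulVec_self, regInd_castAdd, regInd_natAdd, sub_zero,
    dotProduct_single, etaShift]
  congr 2
  simp [etaV]
  ring

theorem sum_vecMulVec_etaShift (hnr : 0 < nr) :
    ∑ i, (vecMulVec (etaShift nr i) (etaShift nr i) - vecMulVec (etaV nr) (etaV nr)) =
      ((4 * nr : ℝ)⁻¹ • 1 - vecMulVec (etaV nr) (etaV nr) : Matrix (Fin nr) (Fin nr) ℝ) := by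
  ext k l
  have hs : Real.sqrt nr ^ 2 = nr := Real.sq_sqrt (Nat.cast_nonneg nr)
  have hs0 : Real.sqrt nr ≠ 0 := by positivity
  simp [Matrix.sum_apply, vecMulVec_apply, etaShift, etaV, Pi.single_apply, one_apply, sub_mul,
    mul_sub, sum_sub_distrib, ite_mul, mul_ite]
  split_ifs <;> field_simp <;> rw [hs] <;> ring

theorem sum_smul_vecMulVec_etaV_vecMul_Qmat (w : Fin (nr + ns) × Fin (nr + ns) → ℝ)
    (hw : ∑ p, w p = 1) (hw_rev : ∀ i j, w (Fin.natAdd nr i, Fin.castAdd ns j) = 0) :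
    ∑ p, w p • vecMulVec (etaV nr ᵥ* Qmat nr ns p) (etaV nr ᵥ* Qmat nr ns p) =
      vecMulVec (etaV nr) (etaV nr) + ∑ i, ∑ j, w (Fin.castAdd ns i, Fin.natAdd nr j) •
        (vecMulVec (etaShift nr i) (etaShift nr i) - vecMulVec (etaV nr) (etaV nr)) := by
  have hsplit : ∀ p, w p • vecMulVec (etaV nr ᵥ* Qmat nr ns p) (etaV nr ᵥ* Qmat nr ns p) =
      w p • vecMulVec (etaV nr) (etaV nr) + w p • (vecMulVec (etaV nr ᵥ* Qmat nr ns p)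
        (etaV nr ᵥ* Qmat nr ns p) - vecMulVec (etaV nr) (etaV nr)) := fun p => by
    rw [← smul_add, add_sub_cancel]
  simp only [hsplit, sum_add_distrib, ← sum_smul, hw, one_smul, Fintype.sum_prod_type,
    Fin.sum_univ_add, etaV_vecMul_Qmat_castAdd_castAdd, etaV_vecMul_Qmat_natAdd_natAdd,
    etaV_vecMul_Qmat_castAdd_natAdd, hw_rev, sub_self, smul_zero, zero_smul, sum_const_zero,
    add_zero, zero_add]

end

theorem gossip_QetaQ_identity_general
    (nr ns : ℕ) (hnr_pos : 0 < nr)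
    (A : Matrix (Fin (nr + ns)) (Fin (nr + ns)) ℝ)
    (lsr ldr ls : ℝ)
    (hlsr : lsr ∈ Set.Ioo (0 : ℝ) 1) (hldr : ldr ∈ Set.Ioo (0 : ℝ) 1)
    (hA_same : ∀ i j : Fin (nr + ns), i ≠ j → (i : ℕ) < nr → (j : ℕ) < nr →
      (((i : ℕ) < nr / 2) ↔ ((j : ℕ) < nr / 2)) → A i j = lsr)
    (hA_diff : ∀ i j : Fin (nr + ns), (i : ℕ) < nr → (j : ℕ) < nr →
      ¬(((i : ℕ) < nr / 2) ↔ ((j : ℕ) < nr / 2)) → A i j = ldr)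
    (hA_stub : ∀ i j : Fin (nr + ns), (i : ℕ) < nr → nr ≤ (j : ℕ) →
      A i j ∈ Set.Ico (0 : ℝ) 1)
    (hA_ss : ∀ i j : Fin (nr + ns), nr ≤ (i : ℕ) → nr ≤ (j : ℕ) → A i j = 0)
    (hA_rowsum : ∀ i : Fin (nr + ns), (i : ℕ) < nr →
      (∑ j ∈ Finset.univ.filter (fun j : Fin (nr + ns) => nr ≤ (j : ℕ)), A i j) = ls)
    (Ω : Type) [MeasurableSpace Ω] (P : Measure Ω) [IsProbabilityMeasure P]
    (edge : ℕ → Ω → Fin (nr + ns) × Fin (nr + ns))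
    (hmeas : ∀ t, Measurable (edge t))
    (hlt : ∀ t ω, (edge t ω).1 < (edge t ω).2)
    (hdist : ∀ (t : ℕ) (i j : Fin (nr + ns)), i < j →
      P {ω | edge t ω = (i, j)} = ENNReal.ofReal (A i j / alphaW nr ns A))
    (l1 : ℝ) (hl1 : l1 = ls / (2 * alphaW nr ns A))
    :
    (Matrix.of fun k l => ∫ ω,
        ((Qmat nr ns (edge 0 ω))ᵀ * Matrix.vecMulVec (etaV nr) (etaV nr) *
          Qmat nr ns (edge 0 ω)) k l ∂P) =
      (1 - 2 * l1) • Matrix.vecMulVec (etaV nr) (etaV nr) +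
        (l1 / (2 * (nr : ℝ))) • (1 : Matrix (Fin nr) (Fin nr) ℝ) := by
  have hA_nonneg : ∀ i j : Fin (nr + ns), i < j → 0 ≤ A i j := by
    intro i j hij
    rcases lt_or_ge (j : ℕ) nr with hj | hj
    · have hi : (i : ℕ) < nr := lt_trans hij hj
      by_cases hc : (i : ℕ) < nr / 2 ↔ (j : ℕ) < nr / 2
      · exact hA_same i j hij.ne hi hj hc ▸ hlsr.1.le
      · exact hA_diff i j hi hj hc ▸ hldr.1.le
    · rcases lt_or_ge (i : ℕ) nr with hi | hi
      · exact (hA_stub i j hi hj).1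
      · exact (hA_ss i j hi hj).ge
  -- with `0 ≤ α`, the probabilities `ENNReal.ofReal (A i j / α)` read back as `A i j / α`
  have hw := measureReal_preimage_singleton_of_lt P (hlt 0) (fun i j => A i j / alphaW nr ns A)
    (fun i j hij => div_nonneg (hA_nonneg i j hij) (alphaW_nonneg hA_nonneg)) (hdist 0)
  have hw_one : ∑ p, P.real (edge 0 ⁻¹' {p}) = 1 := by
    rw [sum_measureReal_preimage_singleton _ fun p _ => hmeas 0 (measurableSet_singleton p)]
    simp
  have hw_mixed : ∀ (i : Fin nr) (j : Fin ns),
      P.real (edge 0 ⁻¹' {(Fin.castAdd ns i, Fin.natAdd nr j)}) =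
        A (Fin.castAdd ns i) (Fin.natAdd nr j) / alphaW nr ns A := fun i j => by
    rw [hw, if_pos (Fin.castAdd_lt_natAdd i j)]
  have hw_rev : ∀ (i : Fin ns) (j : Fin nr),
      P.real (edge 0 ⁻¹' {(Fin.natAdd nr i, Fin.castAdd ns j)}) = 0 := fun i j => by
    rw [hw, if_neg (Fin.castAdd_lt_natAdd j i).asymm]
  have hrow : ∀ i : Fin nr, ∑ j : Fin ns, A (Fin.castAdd ns i) (Fin.natAdd nr j) = ls :=
    fun i => by rw [← sum_filter_le_eq_sum_natAdd, hA_rowsum _ i.isLt]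
  rw [integral_matrix_comp_eq_sum P (hmeas 0)
    fun p => (Qmat nr ns p)ᵀ * vecMulVec (etaV nr) (etaV nr) * Qmat nr ns p]
  simp only [transpose_mul_vecMulVec_mul]
  rw [sum_smul_vecMulVec_etaV_vecMul_Qmat _ hw_one hw_rev]
  simp only [hw_mixed, ← sum_smul, ← sum_div, hrow, ← smul_sum, sum_vecMulVec_etaShift hnr_pos,
    hl1]
  module

theorem gossip_QetaQ_identity
    (nr ns : ℕ) (hnr_even : Even nr) (hnr_pos : 0 < nr) (hns_pos : 0 < ns)
    (A : Matrix (Fin (nr + ns)) (Fin (nr + ns)) ℝ)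
    (hA_symm : A.IsSymm) (hA_diag : ∀ i, A i i = 0)
    (lsr ldr ls : ℝ)
    (hlsr : lsr ∈ Set.Ioo (0 : ℝ) 1) (hldr : ldr ∈ Set.Ioo (0 : ℝ) 1)
    (hls_nonneg : 0 ≤ ls)
    (hA_same : ∀ i j : Fin (nr + ns), i ≠ j → (i : ℕ) < nr → (j : ℕ) < nr →
      (((i : ℕ) < nr / 2) ↔ ((j : ℕ) < nr / 2)) → A i j = lsr)
    (hA_diff : ∀ i j : Fin (nr + ns), (i : ℕ) < nr → (j : ℕ) < nr →
      ¬(((i : ℕ) < nr / 2) ↔ ((j : ℕ) < nr / 2)) → A i j = ldr)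
    (hA_stub : ∀ i j : Fin (nr + ns), (i : ℕ) < nr → nr ≤ (j : ℕ) →
      A i j ∈ Set.Ico (0 : ℝ) 1)
    (hA_ss : ∀ i j : Fin (nr + ns), nr ≤ (i : ℕ) → nr ≤ (j : ℕ) → A i j = 0)
    (hA_rowsum : ∀ i : Fin (nr + ns), (i : ℕ) < nr →
      (∑ j ∈ Finset.univ.filter (fun j : Fin (nr + ns) => nr ≤ (j : ℕ)), A i j) = ls)
    (Ω : Type) [MeasurableSpace Ω] (P : Measure Ω) [IsProbabilityMeasure P]
    (edge : ℕ → Ω → Fin (nr + ns) × Fin (nr + ns))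
    (hmeas : ∀ t, Measurable (edge t))
    (hlt : ∀ t ω, (edge t ω).1 < (edge t ω).2)
    (hdist : ∀ (t : ℕ) (i j : Fin (nr + ns)), i < j →
      P {ω | edge t ω = (i, j)} = ENNReal.ofReal (A i j / alphaW nr ns A))
    (hindep : iIndepFun edge P)
    (l1 : ℝ) (hl1 : l1 = ls / (2 * alphaW nr ns A))
    :
    (Matrix.of fun k l => ∫ ω,
        ((Qmat nr ns (edge 0 ω))ᵀ * Matrix.vecMulVec (etaV nr) (etaV nr) *
          Qmat nr ns (edge 0 ω)) k l ∂P) =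
      (1 - 2 * l1) • Matrix.vecMulVec (etaV nr) (etaV nr) +
        (l1 / (2 * (nr : ℝ))) • (1 : Matrix (Fin nr) (Fin nr) ℝ) :=
  gossip_QetaQ_identity_general nr ns hnr_pos A lsr ldr ls hlsr hldr hA_same hA_diff hA_stub hA_ss
    hA_rowsum Ω P edge hmeas hlt hdist l1 hl1

end
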